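/- Let w be a string, c a position, and P a function assigning a natural number to each position such that P(c) = ρ_w(c) and P(c+r) = ρ_w(c−r) for every r ∈ [1 : ρ_w(c)]. Then c is right-good with respect to P. -/
import Mathlib


/-!
Common definitions: strings as `List α` over an alphabet `α`, 1-based positions.
-/

variable {α : Type*}

/-- The substring `w[i:j]` (1-based, inclusive; empty when `j < i`). -/
def seg (w : List α) (i j : ℕ) : List α := (w.take j).drop (i - 1)

/-- `w` has an even palindrome of radius `r` centered at position `c`:
`r ≤ c`, `c + r ≤ |w|` and `w[c−k+1] = w[c+k]` for all `1 ≤ k ≤ r`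
(here expressed with 0-based list indexing: `w[c−k]? = w[c+k−1]?`). -/
def PalAt (w : List α) (c r : ℕ) : Prop :=
  r ≤ c ∧ c + r ≤ w.length ∧ ∀ k, 1 ≤ k → k ≤ r → w[c - k]? = w[c + k - 1]?

/-- `ρ_w(c)`: the maximal even-palindrome radius at center `c`. -/
noncomputable def rho (w : List α) (c : ℕ) : ℕ := sSup {r | PalAt w c r}

/-- The reduction relation: `x y yᴿ y z → x y z` for nonempty `y`. -/
def Reduces (w w' : List α) : Prop :=
  ∃ x y z : List α, y ≠ [] ∧ w = x ++ y ++ y.reverse ++ y ++ z ∧ w' = x ++ y ++ z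

/-- A string is irreducible if no reduction applies to it. -/
def ZIrreducible (w : List α) : Prop := ∀ w', ¬ Reduces w w'

def ZReducible (w : List α) : Prop := ∃ w', Reduces w w'

/-- `w` is pp-irreducible if its longest proper prefix `w[1:|w|−1]` is irreducible. -/
def PPIrreducible (w : List α) : Prop := ZIrreducible w.dropLast

/-- `w` is ss-reducible if it is reducible and pp-irreducible. -/
def SSReducible (w : List α) : Prop := ZReducible w ∧ PPIrreducible w

/-- A Z-shape occurrence `⟨p1, p2⟩` in `w`: with `s = p2 − p1 ≥ 1`, `p1 − s ≥ 0`,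
`p2 + s ≤ |w|` and `w[p1−s+1 : p2+s] = x xᴿ x` where `x = w[p1−s+1 : p1]`. -/
def ZOcc (w : List α) (p1 p2 : ℕ) : Prop :=
  p1 < p2 ∧ p2 - p1 ≤ p1 ∧ p2 + (p2 - p1) ≤ w.length ∧
    seg w (p1 - (p2 - p1) + 1) (p2 + (p2 - p1)) =
      seg w (p1 - (p2 - p1) + 1) p1 ++ (seg w (p1 - (p2 - p1) + 1) p1).reverse ++
        seg w (p1 - (p2 - p1) + 1) p1

/-- `c ⊏_w d` : `c ≤ d − ρ_w(d) ≤ d ≤ c + ρ_w(c) ≤ d + ρ_w(d)` with `c ≠ d`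
(written without truncated subtraction). -/
def Sqsub (w : List α) (c d : ℕ) : Prop :=
  c < d ∧ c + rho w d ≤ d ∧ d ≤ c + rho w c ∧ c + rho w c ≤ d + rho w d

/-- `𝓕_w(c)`: the maximum frontier over all palindrome chains from `c`
(a palindrome chain is a nonempty list starting at `c` whose consecutive
elements are related by `⊏_w`; its frontier is `e + ρ_w(e)` for its last element `e`). -/
noncomputable def maxFrontier (w : List α) (c : ℕ) : ℕ :=
  sSup {f | ∃ l : List ℕ, l.head? = some c ∧ l.Chain' (Sqsub w) ∧
      ∃ e, l.getLast? = some e ∧ f = e + rho w e}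

/-- `𝓐_w(d)`: the smallest position `c` with `c ≤ d ≤ 𝓕_w(c)`. -/
noncomputable def originator (w : List α) (d : ℕ) : ℕ :=
  sInf {c | 1 ≤ c ∧ c ≤ d ∧ d ≤ maxFrontier w c}

/-- A position `c` of a pp-irreducible string `w` is stable if `𝓕_w(c) < |w|`. -/
def Stable (w : List α) (c : ℕ) : Prop := maxFrontier w c < w.length

/-- `c` is strongly stable if every position in `[1:c]` is stable. -/
def StronglyStable (w : List α) (c : ℕ) : Prop := ∀ e, 1 ≤ e → e ≤ c → Stable w e

/-- `T` is the output of an end-to-end walk on the path graph labeled `u`: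
there are vertices `p 0 = 0, …, p |T| = |u|`, each `≤ |u|`, consecutive ones
adjacent, and `T[i] = u[max (p (i−1)) (p i)]` (1-based; here 0-based indexing). -/
def EndToEndWalkOutput (u T : List α) : Prop :=
  ∃ p : ℕ → ℕ, p 0 = 0 ∧ p T.length = u.length ∧
    (∀ i, i ≤ T.length → p i ≤ u.length) ∧
    (∀ i, i < T.length → p (i + 1) = p i + 1 ∨ p i = p (i + 1) + 1) ∧
    (∀ i, i < T.length → T[i]? = u[max (p i) (p (i + 1)) - 1]?)

/-- `P` is accurate enough between `a` and `b`:
`min (P e) (b − e) = min (ρ_w e) (b − e)` for all `e ∈ [a:b]`. -/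
def AccEnough (w : List α) (P : ℕ → ℕ) (a b : ℕ) : Prop :=
  ∀ e, a ≤ e → e ≤ b → min (P e) (b - e) = min (rho w e) (b - e)

open Classical in
/-- `ν_w(c)`: the largest `e` with `e ⊏_w c`, or `1` if there is none. -/
noncomputable def nu (w : List α) (c : ℕ) : ℕ :=
  if ∃ e, Sqsub w e c then sSup {e | Sqsub w e c} else 1

/-- `c` is left-good w.r.t. `P` if `P` is accurate enough between `ν_w(c)` and `c`. -/
def LeftGood (w : List α) (P : ℕ → ℕ) (c : ℕ) : Prop := AccEnough w P (nu w c) c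

/-- `c` is right-good w.r.t. `P` if `P` is accurate enough between `c` and `c + ρ_w(c)`. -/
def RightGood (w : List α) (P : ℕ → ℕ) (c : ℕ) : Prop := AccEnough w P c (c + rho w c)

lemma palAt_mono {w : List α} {c r s : ℕ} (h : PalAt w c r) (hs : s ≤ r) :
    PalAt w c s :=
  ⟨hs.trans h.1, by have := h.2.1; omega, fun k hk1 hk2 => h.2.2 k hk1 (hk2.trans hs)⟩

lemma palAt_zero {w : List α} {c : ℕ} (hc : c ≤ w.length) : PalAt w c 0 :=
  ⟨Nat.zero_le _, by omega, fun k hk1 hk2 => by omega⟩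

lemma bddAbove_palAt (w : List α) (c : ℕ) : BddAbove {r | PalAt w c r} :=
  ⟨c, fun r hr => hr.1⟩

lemma le_rho {w : List α} {c r : ℕ} (h : PalAt w c r) : r ≤ rho w c :=
  le_csSup (bddAbove_palAt w c) h

lemma palAt_rho {w : List α} {c : ℕ} (hc : c ≤ w.length) : PalAt w c (rho w c) := by
  have h0 : (0 : ℕ) ∈ {r | PalAt w c r} := palAt_zero hc
  exact Nat.sSup_mem ⟨0, h0⟩ (bddAbove_palAt w c)

lemma transfer {w : List α} {c R r s : ℕ} (hpal : PalAt w c R) (hr : r ≤ R)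
    (hs : s + r ≤ R) (hmir : PalAt w (c - r) s) : PalAt w (c + r) s := by
  obtain ⟨hR1, hR2, hR3⟩ := hpal
  obtain ⟨h1, h2, h3⟩ := hmir
  refine ⟨by omega, by omega, fun k hk1 hk2 => ?_⟩
  have e2 : w[c + r + k - 1]? = w[c - r - k]? := by
    have := hR3 (r + k) (by omega) (by omega)
    rw [show c + (r + k) - 1 = c + r + k - 1 from by omega,
        show c - (r + k) = c - r - k from by omega] at this
    exact this.symm
  have e3 : w[c - r - k]? = w[c - r + k - 1]? := by
    have := h3 k hk1 hk2
    rwa [show c - r + k - 1 = c - r + k - 1 from rfl] at this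
  rw [e2, e3]
  rcases le_or_gt k r with hkr | hkr
  · have := hR3 (r - k + 1) (by omega) (by omega)
    rw [show c - (r - k + 1) = c - r + k - 1 from by omega,
        show c + (r - k + 1) - 1 = c + r - k from by omega] at this
    exact this.symm
  · have := hR3 (k - r) (by omega) (by omega)
    rw [show c - (k - r) = c + r - k from by omega,
        show c + (k - r) - 1 = c - r + k - 1 from by omega] at this
    exact this

lemma transfer' {w : List α} {c R r s : ℕ} (hpal : PalAt w c R) (hr : r ≤ R)
    (hs : s + r ≤ R) (hmir : PalAt w (c + r) s) : PalAt w (c - r) s := by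
  obtain ⟨hR1, hR2, hR3⟩ := hpal
  obtain ⟨h1, h2, h3⟩ := hmir
  refine ⟨by omega, by omega, fun k hk1 hk2 => ?_⟩
  have e2 : w[c - r - k]? = w[c + r + k - 1]? := by
    have := hR3 (r + k) (by omega) (by omega)
    rw [show c + (r + k) - 1 = c + r + k - 1 from by omega,
        show c - (r + k) = c - r - k from by omega] at this
    exact this
  have e3 : w[c - r + k - 1]? = w[c + r - k]? := by
    rcases le_or_gt k r with hkr | hkr
    · have := hR3 (r - k + 1) (by omega) (by omega)
      rw [show c - (r - k + 1) = c - r + k - 1 from by omega,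
          show c + (r - k + 1) - 1 = c + r - k from by omega] at this
      exact this
    · have := hR3 (k - r) (by omega) (by omega)
      rw [show c - (k - r) = c + r - k from by omega,
          show c + (k - r) - 1 = c - r + k - 1 from by omega] at this
      exact this.symm
  rw [e2, e3]
  exact (h3 k hk1 hk2).symm

lemma mirror_min {w : List α} {c R r : ℕ} (hpal : PalAt w c R) (hR : R = rho w c)
    (hr1 : 1 ≤ r) (hr2 : r ≤ R) :
    min (rho w (c - r)) (R - r) = min (rho w (c + r)) (R - r) := by
  have hlen : c - r ≤ w.length := by have := hpal.2.1; omega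
  have hlen' : c + r ≤ w.length := by have := hpal.2.1; omega
  have key : ∀ s, s ≤ R - r → (PalAt w (c - r) s ↔ PalAt w (c + r) s) := fun s hs =>
    ⟨transfer hpal hr2 (by omega), transfer' hpal hr2 (by omega)⟩
  have h1 : min (rho w (c - r)) (R - r) ≤ min (rho w (c + r)) (R - r) := by
    have hp : PalAt w (c - r) (min (rho w (c - r)) (R - r)) :=
      palAt_mono (palAt_rho hlen) (min_le_left _ _)
    have := le_rho ((key _ (min_le_right _ _)).1 hp)
    omega
  have h2 : min (rho w (c + r)) (R - r) ≤ min (rho w (c - r)) (R - r) := by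
    have hp : PalAt w (c + r) (min (rho w (c + r)) (R - r)) :=
      palAt_mono (palAt_rho hlen') (min_le_left _ _)
    have := le_rho ((key _ (min_le_right _ _)).2 hp)
    omega
  omega

/-- if `P(c) = ρ_w(c)` and `P(c+r) = ρ_w(c−r)` for every
`r ∈ [1 : ρ_w(c)]`, then `c` is right-good w.r.t. `P`. -/
theorem mirror_values_rightGood (w : List α) (P : ℕ → ℕ) (c : ℕ)
    (hc1 : 1 ≤ c) (hc2 : c ≤ w.length) (hPc : P c = rho w c)
    (h : ∀ r, 1 ≤ r → r ≤ rho w c → P (c + r) = rho w (c - r)) :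
    RightGood w P c := by
  intro e he1 he2
  obtain ⟨r, rfl⟩ : ∃ r, e = c + r := ⟨e - c, by omega⟩
  rcases Nat.eq_zero_or_pos r with rfl | hr
  · simp [hPc]
  · have hpal := palAt_rho (w := w) (c := c) hc2
    have hrR : r ≤ rho w c := by omega
    rw [h r hr hrR, show c + rho w c - (c + r) = rho w c - r from by omega]
    exact mirror_min hpal rfl hr hrR
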